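/- Let 𝓟 = (P₀, P₁, m₁, m₂, m₃, θ) be a pre-Lie-Rinehart 2-algebra over A. Define l₂(X⁰,Y⁰) = m₂(X⁰,Y⁰) − m₂(Y⁰,X⁰), l₂(X⁰,Y¹) = −l₂(Y¹,X⁰) = m₂(X⁰,Y¹) − m₂(Y¹,X⁰), and l₃(X⁰,Y⁰,Z⁰) = m₃(X⁰,Y⁰,Z⁰) + m₃(Z⁰,X⁰,Y⁰) + m₃(Y⁰,Z⁰,X⁰). Then (P₀, P₁, l₁ = m₁, l₂, l₃, θ) is a Lie-Rinehart 2-algebra over A. -/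

import Mathlib

/-- A pre-Lie-Rinehart 2-algebra over `A`: a 2-term complex `m1 : P1 → P0` of
`A`-modules, structure maps `m200 : P0×P0 → P0`, `m201 : P0×P1 → P1`,
`m210 : P1×P0 → P1` (the components of `m₂`), `m3 : P0×P0×P0 → P1` (skew in its
first two arguments), and an `A`-linear anchor `θ : P0 → Der(A)`, satisfying the
pre-Lie 2-algebra axioms (a)-(f) together with the Rinehart compatibility
conditions (i)-(v). -/
def IsPreLieRinehart2 (K : Type*) {A P0 P1 : Type*} [Field K] [CommRing A]
    [Algebra K A]
    [AddCommGroup P0] [Module K P0] [Module A P0] [IsScalarTower K A P0]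
    [AddCommGroup P1] [Module K P1] [Module A P1] [IsScalarTower K A P1]
    (m1 : P1 → P0) (m200 : P0 → P0 → P0) (m201 : P0 → P1 → P1)
    (m210 : P1 → P0 → P1) (m3 : P0 → P0 → P0 → P1)
    (θ : P0 → Derivation K A A) : Prop :=
  -- m1 is A-linear
  (∀ u v : P1, m1 (u + v) = m1 u + m1 v) ∧
  (∀ (a : A) (u : P1), m1 (a • u) = a • m1 u) ∧
  -- biadditivity of the components of m₂
  (∀ X Y Z : P0, m200 (X + Y) Z = m200 X Z + m200 Y Z) ∧
  (∀ X Y Z : P0, m200 X (Y + Z) = m200 X Y + m200 X Z) ∧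
  (∀ (X Y : P0) (u : P1), m201 (X + Y) u = m201 X u + m201 Y u) ∧
  (∀ (X : P0) (u v : P1), m201 X (u + v) = m201 X u + m201 X v) ∧
  (∀ (u v : P1) (X : P0), m210 (u + v) X = m210 u X + m210 v X) ∧
  (∀ (u : P1) (X Y : P0), m210 u (X + Y) = m210 u X + m210 u Y) ∧
  -- Rinehart conditions (i) and (ii) for m₂
  (∀ (a : A) (X Y : P0), m200 X (a • Y) = a • m200 X Y + θ X a • Y) ∧
  (∀ (a : A) (X Y : P0), m200 (a • X) Y = a • m200 X Y) ∧
  (∀ (a : A) (X : P0) (u : P1), m201 X (a • u) = a • m201 X u + θ X a • u) ∧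
  (∀ (a : A) (X : P0) (u : P1), m201 (a • X) u = a • m201 X u) ∧
  (∀ (a : A) (u : P1) (X : P0), m210 u (a • X) = a • m210 u X) ∧
  (∀ (a : A) (u : P1) (X : P0), m210 (a • u) X = a • m210 u X) ∧
  -- m3 is A-trilinear and skew-symmetric in its first two arguments
  (∀ W X Y Z : P0, m3 (W + X) Y Z = m3 W Y Z + m3 X Y Z) ∧
  (∀ W X Y Z : P0, m3 W (X + Y) Z = m3 W X Z + m3 W Y Z) ∧
  (∀ W X Y Z : P0, m3 W X (Y + Z) = m3 W X Y + m3 W X Z) ∧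
  (∀ (a : A) (X Y Z : P0), m3 (a • X) Y Z = a • m3 X Y Z) ∧
  (∀ (a : A) (X Y Z : P0), m3 X (a • Y) Z = a • m3 X Y Z) ∧
  (∀ (a : A) (X Y Z : P0), m3 X Y (a • Z) = a • m3 X Y Z) ∧
  (∀ X Y Z : P0, m3 X Y Z = - m3 Y X Z) ∧
  -- axiom (a): m1 m2(x, m) = m2(x, m1 m)
  (∀ (X : P0) (u : P1), m1 (m201 X u) = m200 X (m1 u)) ∧
  -- axiom (b): m1 m2(m, x) = m2(m1 m, x)
  (∀ (u : P1) (X : P0), m1 (m210 u X) = m200 (m1 u) X) ∧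
  -- axiom (c): m2(m1 m, n) = m2(m, m1 n)
  (∀ u v : P1, m201 (m1 u) v = m210 u (m1 v)) ∧
  -- axiom (e₁)
  (∀ X Y Z : P0, m1 (m3 X Y Z)
      = m200 X (m200 Y Z) - m200 (m200 X Y) Z
        - m200 Y (m200 X Z) + m200 (m200 Y X) Z) ∧
  -- axiom (e₂)
  (∀ (X Y : P0) (u : P1), m3 X Y (m1 u)
      = m201 X (m201 Y u) - m201 (m200 X Y) u
        - m201 Y (m201 X u) + m201 (m200 Y X) u) ∧
  -- axiom (e₃)
  (∀ (u : P1) (X Y : P0), m3 (m1 u) X Y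
      = m210 u (m200 X Y) - m210 (m210 u X) Y
        - m201 X (m210 u Y) + m210 (m201 X u) Y) ∧
  -- axiom (f)
  (∀ W X Y Z : P0,
      m201 W (m3 X Y Z) - m201 X (m3 W Y Z) + m201 Y (m3 W X Z)
        + m210 (m3 X Y W) Z - m210 (m3 W Y X) Z + m210 (m3 W X Y) Z
        - m3 X Y (m200 W Z) + m3 W Y (m200 X Z) - m3 W X (m200 Y Z)
        - m3 (m200 W X - m200 X W) Y Z + m3 (m200 W Y - m200 Y W) X Z
        - m3 (m200 X Y - m200 Y X) W Z = 0) ∧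
  -- the anchor θ is A-linear and satisfies (iv), (v)
  (∀ X Y : P0, θ (X + Y) = θ X + θ Y) ∧
  (∀ (a : A) (X : P0), θ (a • X) = a • θ X) ∧
  (∀ X Y : P0, θ (m200 X Y - m200 Y X) = ⁅θ X, θ Y⁆) ∧
  (∀ u : P1, θ (m1 u) = 0)

/-- A Lie-Rinehart 2-algebra over `A`: a 2-term complex `l1 : P1 → P0` of
`A`-modules, a skew-symmetric bracket with components `l200 : P0×P0 → P0` and
`l201 : P0×P1 → P1`, a totally skew-symmetric `l3 : P0×P0×P0 → P1`, and an
`A`-linear anchor `θ : P0 → Der(A)`, satisfying the Lie 2-algebra axioms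
(a)-(d) together with the Rinehart compatibility conditions. -/
def IsLieRinehart2 (K : Type*) {A P0 P1 : Type*} [Field K] [CommRing A]
    [Algebra K A]
    [AddCommGroup P0] [Module K P0] [Module A P0] [IsScalarTower K A P0]
    [AddCommGroup P1] [Module K P1] [Module A P1] [IsScalarTower K A P1]
    (l1 : P1 → P0) (l200 : P0 → P0 → P0) (l201 : P0 → P1 → P1)
    (l3 : P0 → P0 → P0 → P1)
    (θ : P0 → Derivation K A A) : Prop :=
  -- l1 is A-linear
  (∀ u v : P1, l1 (u + v) = l1 u + l1 v) ∧
  (∀ (a : A) (u : P1), l1 (a • u) = a • l1 u) ∧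
  -- biadditivity and skew-symmetry of l₂
  (∀ X Y Z : P0, l200 (X + Y) Z = l200 X Z + l200 Y Z) ∧
  (∀ X Y Z : P0, l200 X (Y + Z) = l200 X Y + l200 X Z) ∧
  (∀ X Y : P0, l200 X Y = - l200 Y X) ∧
  (∀ (X Y : P0) (u : P1), l201 (X + Y) u = l201 X u + l201 Y u) ∧
  (∀ (X : P0) (u v : P1), l201 X (u + v) = l201 X u + l201 X v) ∧
  -- Rinehart conditions for l₂
  (∀ (a : A) (X Y : P0), l200 X (a • Y) = a • l200 X Y + θ X a • Y) ∧
  (∀ (a : A) (X : P0) (u : P1), l201 X (a • u) = a • l201 X u + θ X a • u) ∧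
  (∀ (a : A) (X : P0) (u : P1), l201 (a • X) u = a • l201 X u) ∧
  -- l3 is A-trilinear and totally skew-symmetric
  (∀ W X Y Z : P0, l3 (W + X) Y Z = l3 W Y Z + l3 X Y Z) ∧
  (∀ W X Y Z : P0, l3 W (X + Y) Z = l3 W X Z + l3 W Y Z) ∧
  (∀ W X Y Z : P0, l3 W X (Y + Z) = l3 W X Y + l3 W X Z) ∧
  (∀ (a : A) (X Y Z : P0), l3 (a • X) Y Z = a • l3 X Y Z) ∧
  (∀ (a : A) (X Y Z : P0), l3 X (a • Y) Z = a • l3 X Y Z) ∧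
  (∀ (a : A) (X Y Z : P0), l3 X Y (a • Z) = a • l3 X Y Z) ∧
  (∀ X Y Z : P0, l3 X Y Z = - l3 Y X Z) ∧
  (∀ X Y Z : P0, l3 X Y Z = - l3 X Z Y) ∧
  -- axiom (a)
  (∀ (X : P0) (u : P1), l1 (l201 X u) = l200 X (l1 u)) ∧
  (∀ u v : P1, l201 (l1 u) v = - l201 (l1 v) u) ∧
  -- axiom (b)
  (∀ X Y Z : P0, l1 (l3 X Y Z)
      = l200 X (l200 Y Z) + l200 Z (l200 X Y) + l200 Y (l200 Z X)) ∧
  -- axiom (c)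
  (∀ (X Y : P0) (u : P1), l3 X Y (l1 u)
      = l201 X (l201 Y u) - l201 (l200 X Y) u - l201 Y (l201 X u)) ∧
  -- axiom (d): the Jacobiator identity
  (∀ X1 X2 X3 X4 : P0,
      l201 X1 (l3 X2 X3 X4) - l201 X2 (l3 X1 X3 X4) + l201 X3 (l3 X1 X2 X4)
        - l201 X4 (l3 X1 X2 X3)
        - l3 (l200 X1 X2) X3 X4 + l3 (l200 X1 X3) X2 X4 - l3 (l200 X1 X4) X2 X3
        - l3 (l200 X2 X3) X1 X4 + l3 (l200 X2 X4) X1 X3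
        - l3 (l200 X3 X4) X1 X2 = 0) ∧
  -- the anchor θ is A-linear and compatible
  (∀ X Y : P0, θ (X + Y) = θ X + θ Y) ∧
  (∀ (a : A) (X : P0), θ (a • X) = a • θ X) ∧
  (∀ X Y : P0, θ (l200 X Y) = ⁅θ X, θ Y⁆) ∧
  (∀ u : P1, θ (l1 u) = 0)

/-! The Lie-Rinehart 2-algebra identities are the skew-symmetrizations of the pre-Lie ones.
The Jacobiator of the commutator bracket is the cyclic sum of the associator identity (e₁);
`l₃(X, Y, m₁ u)` is matched by (e₂) and two instances of (e₃); and the higher Jacobi identity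
is the alternating sum of (f) over the four choices of its distinguished last argument.
Since `m₃` is skew in its first two arguments, its cyclic sum `l₃` is totally skew.
The Rinehart conditions survive since `m₂(a X, Y) = a m₂(X, Y)` carries no anchor term. -/

theorem map_sub_of_map_add {M N : Type*} [AddGroup M] [AddGroup N] {f : M → N}
    (hf : ∀ x y, f (x + y) = f x + f y) (x y : M) : f (x - y) = f x - f y :=
  (AddMonoidHom.mk' f hf).map_sub x y

section SkewSymm

variable {R M N Q : Type*}

def skewSymm [Sub Q] (f : M → N → Q) (g : N → M → Q) (X : M) (u : N) : Q :=
  f X u - g u X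

theorem skewSymm_self_swap [AddGroup Q] (f : M → M → Q) (X Y : M) :
    skewSymm f f X Y = -skewSymm f f Y X :=
  (neg_sub _ _).symm

theorem skewSymm_add_left [Add M] [AddCommGroup Q] {f : M → N → Q} {g : N → M → Q}
    (hf : ∀ X Y u, f (X + Y) u = f X u + f Y u) (hg : ∀ u X Y, g u (X + Y) = g u X + g u Y)
    (X Y : M) (u : N) : skewSymm f g (X + Y) u = skewSymm f g X u + skewSymm f g Y u := by
  simp only [skewSymm, hf, hg]
  abel

theorem skewSymm_add_right [Add N] [AddCommGroup Q] {f : M → N → Q} {g : N → M → Q}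
    (hf : ∀ X u v, f X (u + v) = f X u + f X v) (hg : ∀ u v X, g (u + v) X = g u X + g v X)
    (X : M) (u v : N) : skewSymm f g X (u + v) = skewSymm f g X u + skewSymm f g X v := by
  simp only [skewSymm, hf, hg]
  abel

theorem skewSymm_smul_left [Monoid R] [SMul R M] [AddGroup Q] [DistribMulAction R Q]
    {f : M → N → Q} {g : N → M → Q}
    (hf : ∀ (a : R) X u, f (a • X) u = a • f X u) (hg : ∀ (a : R) u X, g u (a • X) = a • g u X)
    (a : R) (X : M) (u : N) : skewSymm f g (a • X) u = a • skewSymm f g X u := by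
  simp only [skewSymm, hf, hg, smul_sub]

theorem skewSymm_smul_right [Ring R] [AddCommGroup N] [Module R N]
    {f : M → N → N} {g : N → M → N} {δ : M → R → R}
    (hf : ∀ (a : R) X u, f X (a • u) = a • f X u + δ X a • u)
    (hg : ∀ (a : R) u X, g (a • u) X = a • g u X)
    (a : R) (X : M) (u : N) : skewSymm f g X (a • u) = a • skewSymm f g X u + δ X a • u := by
  simp only [skewSymm, hf, hg, smul_sub]
  abel

end SkewSymm

section CyclicSum

variable {R M N : Type*}

def cyclicSum [Add N] (f : M → M → M → N) (X Y Z : M) : N :=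
  f X Y Z + f Z X Y + f Y Z X

theorem cyclicSum_add_left [Add M] [AddCommGroup N] {f : M → M → M → N}
    (h₁ : ∀ W X Y Z, f (W + X) Y Z = f W Y Z + f X Y Z)
    (h₂ : ∀ W X Y Z, f W (X + Y) Z = f W X Z + f W Y Z)
    (h₃ : ∀ W X Y Z, f W X (Y + Z) = f W X Y + f W X Z) (W X Y Z : M) :
    cyclicSum f (W + X) Y Z = cyclicSum f W Y Z + cyclicSum f X Y Z := by
  simp only [cyclicSum, h₁, h₂, h₃]
  abel

theorem cyclicSum_add_middle [Add M] [AddCommGroup N] {f : M → M → M → N}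
    (h₁ : ∀ W X Y Z, f (W + X) Y Z = f W Y Z + f X Y Z)
    (h₂ : ∀ W X Y Z, f W (X + Y) Z = f W X Z + f W Y Z)
    (h₃ : ∀ W X Y Z, f W X (Y + Z) = f W X Y + f W X Z) (W X Y Z : M) :
    cyclicSum f W (X + Y) Z = cyclicSum f W X Z + cyclicSum f W Y Z := by
  simp only [cyclicSum, h₁, h₂, h₃]
  abel

theorem cyclicSum_add_right [Add M] [AddCommGroup N] {f : M → M → M → N}
    (h₁ : ∀ W X Y Z, f (W + X) Y Z = f W Y Z + f X Y Z)
    (h₂ : ∀ W X Y Z, f W (X + Y) Z = f W X Z + f W Y Z)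
    (h₃ : ∀ W X Y Z, f W X (Y + Z) = f W X Y + f W X Z) (W X Y Z : M) :
    cyclicSum f W X (Y + Z) = cyclicSum f W X Y + cyclicSum f W X Z := by
  simp only [cyclicSum, h₁, h₂, h₃]
  abel

theorem cyclicSum_smul_left [Monoid R] [SMul R M] [AddCommMonoid N] [DistribMulAction R N]
    {f : M → M → M → N}
    (h₁ : ∀ (a : R) X Y Z, f (a • X) Y Z = a • f X Y Z)
    (h₂ : ∀ (a : R) X Y Z, f X (a • Y) Z = a • f X Y Z)
    (h₃ : ∀ (a : R) X Y Z, f X Y (a • Z) = a • f X Y Z) (a : R) (X Y Z : M) :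
    cyclicSum f (a • X) Y Z = a • cyclicSum f X Y Z := by
  simp only [cyclicSum, h₁, h₂, h₃, smul_add]

theorem cyclicSum_smul_middle [Monoid R] [SMul R M] [AddCommMonoid N] [DistribMulAction R N]
    {f : M → M → M → N}
    (h₁ : ∀ (a : R) X Y Z, f (a • X) Y Z = a • f X Y Z)
    (h₂ : ∀ (a : R) X Y Z, f X (a • Y) Z = a • f X Y Z)
    (h₃ : ∀ (a : R) X Y Z, f X Y (a • Z) = a • f X Y Z) (a : R) (X Y Z : M) :
    cyclicSum f X (a • Y) Z = a • cyclicSum f X Y Z := by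
  simp only [cyclicSum, h₁, h₂, h₃, smul_add]

theorem cyclicSum_smul_right [Monoid R] [SMul R M] [AddCommMonoid N] [DistribMulAction R N]
    {f : M → M → M → N}
    (h₁ : ∀ (a : R) X Y Z, f (a • X) Y Z = a • f X Y Z)
    (h₂ : ∀ (a : R) X Y Z, f X (a • Y) Z = a • f X Y Z)
    (h₃ : ∀ (a : R) X Y Z, f X Y (a • Z) = a • f X Y Z) (a : R) (X Y Z : M) :
    cyclicSum f X Y (a • Z) = a • cyclicSum f X Y Z := by
  simp only [cyclicSum, h₁, h₂, h₃, smul_add]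

variable [AddCommGroup N] {f : M → M → M → N}

theorem cyclicSum_swap_left (hf : ∀ X Y Z, f X Y Z = -f Y X Z) (X Y Z : M) :
    cyclicSum f X Y Z = -cyclicSum f Y X Z := by
  rw [cyclicSum, cyclicSum, hf Y X Z, hf Z Y X, hf X Z Y]
  abel

theorem cyclicSum_swap_right (hf : ∀ X Y Z, f X Y Z = -f Y X Z) (X Y Z : M) :
    cyclicSum f X Y Z = -cyclicSum f X Z Y := by
  rw [cyclicSum, cyclicSum, hf X Z Y, hf Y X Z, hf Z Y X]
  abel

theorem cyclicSum_eq_of_skew (hf : ∀ X Y Z, f X Y Z = -f Y X Z) (X Y Z : M) :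
    cyclicSum f X Y Z = f X Y Z - f X Z Y + f Y Z X := by
  rw [cyclicSum, hf Z X Y, sub_eq_add_neg]

end CyclicSum

section PreLie

variable {P0 P1 : Type*} [AddCommGroup P1] {m1 : P1 → P0} {m200 : P0 → P0 → P0}
  {m201 : P0 → P1 → P1} {m210 : P1 → P0 → P1} {m3 : P0 → P0 → P0 → P1}

theorem skewSymm_map_swap (hc : ∀ u v, m201 (m1 u) v = m210 u (m1 v)) (u v : P1) :
    skewSymm m201 m210 (m1 u) v = -skewSymm m201 m210 (m1 v) u := by
  rw [skewSymm, skewSymm, hc, hc, neg_sub]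

variable [AddCommGroup P0]

theorem map_skewSymm (hm1 : ∀ u v, m1 (u + v) = m1 u + m1 v)
    (ha : ∀ X u, m1 (m201 X u) = m200 X (m1 u)) (hb : ∀ u X, m1 (m210 u X) = m200 (m1 u) X)
    (X : P0) (u : P1) : m1 (skewSymm m201 m210 X u) = skewSymm m200 m200 X (m1 u) := by
  rw [skewSymm, map_sub_of_map_add hm1, ha, hb, skewSymm]

theorem map_cyclicSum_eq_jacobiator (hm1 : ∀ u v, m1 (u + v) = m1 u + m1 v)
    (hl : ∀ X Y Z, m200 (X + Y) Z = m200 X Z + m200 Y Z)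
    (hr : ∀ X Y Z, m200 X (Y + Z) = m200 X Y + m200 X Z)
    (he₁ : ∀ X Y Z, m1 (m3 X Y Z) = m200 X (m200 Y Z) - m200 (m200 X Y) Z
      - m200 Y (m200 X Z) + m200 (m200 Y X) Z) (X Y Z : P0) :
    m1 (cyclicSum m3 X Y Z) = skewSymm m200 m200 X (skewSymm m200 m200 Y Z)
      + skewSymm m200 m200 Z (skewSymm m200 m200 X Y)
      + skewSymm m200 m200 Y (skewSymm m200 m200 Z X) := by
  have hl' X Y Z : m200 (X - Y) Z = m200 X Z - m200 Y Z :=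
    map_sub_of_map_add (f := (m200 · Z)) (hl · · Z) X Y
  have hr' X Y Z : m200 X (Y - Z) = m200 X Y - m200 X Z := map_sub_of_map_add (hr X) Y Z
  simp only [cyclicSum, skewSymm, hm1, he₁, hl', hr']
  abel

theorem cyclicSum_apply_map_right
    (hl₁ : ∀ X Y u, m201 (X + Y) u = m201 X u + m201 Y u)
    (hr₁ : ∀ X u v, m201 X (u + v) = m201 X u + m201 X v)
    (hl₂ : ∀ u v X, m210 (u + v) X = m210 u X + m210 v X)
    (hr₂ : ∀ u X Y, m210 u (X + Y) = m210 u X + m210 u Y)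
    (hskew : ∀ X Y Z, m3 X Y Z = -m3 Y X Z)
    (he₂ : ∀ X Y u, m3 X Y (m1 u) = m201 X (m201 Y u) - m201 (m200 X Y) u
      - m201 Y (m201 X u) + m201 (m200 Y X) u)
    (he₃ : ∀ u X Y, m3 (m1 u) X Y = m210 u (m200 X Y) - m210 (m210 u X) Y
      - m201 X (m210 u Y) + m210 (m201 X u) Y) (X Y : P0) (u : P1) :
    cyclicSum m3 X Y (m1 u) = skewSymm m201 m210 X (skewSymm m201 m210 Y u)
      - skewSymm m201 m210 (skewSymm m200 m200 X Y) u
      - skewSymm m201 m210 Y (skewSymm m201 m210 X u) := by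
  have hl₁' X Y u : m201 (X - Y) u = m201 X u - m201 Y u :=
    map_sub_of_map_add (f := (m201 · u)) (hl₁ · · u) X Y
  have hr₁' X u v : m201 X (u - v) = m201 X u - m201 X v := map_sub_of_map_add (hr₁ X) u v
  have hl₂' u v X : m210 (u - v) X = m210 u X - m210 v X :=
    map_sub_of_map_add (f := (m210 · X)) (hl₂ · · X) u v
  have hr₂' u X Y : m210 u (X - Y) = m210 u X - m210 u Y := map_sub_of_map_add (hr₂ u) X Y
  rw [cyclicSum, hskew Y (m1 u) X]
  simp only [skewSymm, he₂, he₃, hl₁', hr₁', hl₂', hr₂']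
  abel

end PreLie

theorem jacobiator_identity_cyclicSum {P0 P1 : Type*} [AddCommGroup P0] [AddCommGroup P1]
    {m200 : P0 → P0 → P0} {m201 : P0 → P1 → P1} {m210 : P1 → P0 → P1} {m3 : P0 → P0 → P0 → P1}
    (hr₁ : ∀ X u v, m201 X (u + v) = m201 X u + m201 X v)
    (hl₂ : ∀ u v X, m210 (u + v) X = m210 u X + m210 v X)
    (h₁ : ∀ W X Y Z, m3 (W + X) Y Z = m3 W Y Z + m3 X Y Z)
    (h₃ : ∀ W X Y Z, m3 W X (Y + Z) = m3 W X Y + m3 W X Z)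
    (hskew : ∀ X Y Z, m3 X Y Z = -m3 Y X Z)
    (hf : ∀ W X Y Z : P0,
      m201 W (m3 X Y Z) - m201 X (m3 W Y Z) + m201 Y (m3 W X Z)
        + m210 (m3 X Y W) Z - m210 (m3 W Y X) Z + m210 (m3 W X Y) Z
        - m3 X Y (m200 W Z) + m3 W Y (m200 X Z) - m3 W X (m200 Y Z)
        - m3 (m200 W X - m200 X W) Y Z + m3 (m200 W Y - m200 Y W) X Z
        - m3 (m200 X Y - m200 Y X) W Z = 0)
    (X₁ X₂ X₃ X₄ : P0) :
    let l₂ := skewSymm m201 m210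
    let l₃ := cyclicSum m3
    let c := skewSymm m200 m200
    l₂ X₁ (l₃ X₂ X₃ X₄) - l₂ X₂ (l₃ X₁ X₃ X₄) + l₂ X₃ (l₃ X₁ X₂ X₄) - l₂ X₄ (l₃ X₁ X₂ X₃)
      - l₃ (c X₁ X₂) X₃ X₄ + l₃ (c X₁ X₃) X₂ X₄ - l₃ (c X₁ X₄) X₂ X₃
      - l₃ (c X₂ X₃) X₁ X₄ + l₃ (c X₂ X₄) X₁ X₃ - l₃ (c X₃ X₄) X₁ X₂ = 0 := by
  intro l₂ l₃ c
  have hr₁' X u v : m201 X (u - v) = m201 X u - m201 X v := map_sub_of_map_add (hr₁ X) u v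
  have hl₂' u v X : m210 (u - v) X = m210 u X - m210 v X :=
    map_sub_of_map_add (f := (m210 · X)) (hl₂ · · X) u v
  have h₁' W X Y Z : m3 (W - X) Y Z = m3 W Y Z - m3 X Y Z :=
    map_sub_of_map_add (f := (m3 · Y Z)) (h₁ · · Y Z) W X
  have h₃' W X Y Z : m3 W X (Y - Z) = m3 W X Y - m3 W X Z := map_sub_of_map_add (h₃ W X) Y Z
  have F₁ := hf X₁ X₂ X₃ X₄
  have F₂ := hf X₁ X₂ X₄ X₃
  have F₃ := hf X₁ X₃ X₄ X₂
  have F₄ := hf X₂ X₃ X₄ X₁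
  simp only [h₁'] at F₁ F₂ F₃ F₄
  -- Written this way, every `m₃` term has its first two arguments in the same order as in
  -- the four instances of (f), so skew-symmetry is not needed again.
  simp only [l₂, l₃, c, cyclicSum_eq_of_skew hskew, skewSymm, hr₁, hr₁', hl₂, hl₂', h₁', h₃']
  linear_combination (norm := abel) F₁ - F₂ + F₃ - F₄

/-- the skew-symmetrization of a pre-Lie-Rinehart 2-algebra is a
Lie-Rinehart 2-algebra: with `l₂(X⁰,Y⁰) = m₂(X⁰,Y⁰) − m₂(Y⁰,X⁰)`,
`l₂(X⁰,Y¹) = m₂(X⁰,Y¹) − m₂(Y¹,X⁰)` and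
`l₃(X,Y,Z) = m₃(X,Y,Z) + m₃(Z,X,Y) + m₃(Y,Z,X)`, the data
`(P₀, P₁, l₁ = m₁, l₂, l₃, θ)` is a Lie-Rinehart 2-algebra over `A`. -/
theorem preLieRinehart2_subAdjacent {K A P0 P1 : Type*} [Field K] [CommRing A]
    [Algebra K A]
    [AddCommGroup P0] [Module K P0] [Module A P0] [IsScalarTower K A P0]
    [AddCommGroup P1] [Module K P1] [Module A P1] [IsScalarTower K A P1]
    (m1 : P1 → P0) (m200 : P0 → P0 → P0) (m201 : P0 → P1 → P1)
    (m210 : P1 → P0 → P1) (m3 : P0 → P0 → P0 → P1)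
    (θ : P0 → Derivation K A A)
    (h : IsPreLieRinehart2 K m1 m200 m201 m210 m3 θ) :
    IsLieRinehart2 K m1
      (fun X Y => m200 X Y - m200 Y X)
      (fun X u => m201 X u - m210 u X)
      (fun X Y Z => m3 X Y Z + m3 Z X Y + m3 Y Z X)
      θ := by
  obtain ⟨m1_add, m1_smul, m200_add_left, m200_add_right, m201_add_left, m201_add_right,
    m210_add_left, m210_add_right, m200_smul_right, m200_smul_left, m201_smul_right,
    m201_smul_left, m210_smul_right, m210_smul_left, m3_add₁, m3_add₂, m3_add₃, m3_smul₁,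
    m3_smul₂, m3_smul₃, m3_skew, ha, hb, hc, he₁, he₂, he₃, hf, θ_add, θ_smul, θ_bracket,
    θ_m1⟩ := h
  exact ⟨m1_add, m1_smul,
    skewSymm_add_left m200_add_left m200_add_right,
    skewSymm_add_right m200_add_right m200_add_left,
    skewSymm_self_swap m200,
    skewSymm_add_left m201_add_left m210_add_right,
    skewSymm_add_right m201_add_right m210_add_left,
    skewSymm_smul_right m200_smul_right m200_smul_left,
    skewSymm_smul_right m201_smul_right m210_smul_left,
    skewSymm_smul_left m201_smul_left m210_smul_right,
    cyclicSum_add_left m3_add₁ m3_add₂ m3_add₃,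
    cyclicSum_add_middle m3_add₁ m3_add₂ m3_add₃,
    cyclicSum_add_right m3_add₁ m3_add₂ m3_add₃,
    cyclicSum_smul_left m3_smul₁ m3_smul₂ m3_smul₃,
    cyclicSum_smul_middle m3_smul₁ m3_smul₂ m3_smul₃,
    cyclicSum_smul_right m3_smul₁ m3_smul₂ m3_smul₃,
    cyclicSum_swap_left m3_skew, cyclicSum_swap_right m3_skew,
    map_skewSymm m1_add ha hb, skewSymm_map_swap hc,
    map_cyclicSum_eq_jacobiator m1_add m200_add_left m200_add_right he₁,
    cyclicSum_apply_map_right m201_add_left m201_add_right m210_add_left m210_add_right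
      m3_skew he₂ he₃,
    jacobiator_identity_cyclicSum m201_add_right m210_add_left m3_add₁ m3_add₃ m3_skew hf,
    θ_add, θ_smul, θ_bracket, θ_m1⟩
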